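/- There exists a surjective group homomorphism from the free product ℤ/2 ∗ ℤ/3 onto the alternating group A₄ on 4 letters whose kernel is torsion-free. -/

import Mathlib

/-!
In a free product of groups every element of finite order is conjugate into a factor: induct on
the length of its reduced word. If the first and last letters lie in different factors, every
power of the word is again a reduced nonempty word, so the element has infinite order; if they
lie in the same factor, conjugating by the last letter merges it into the first one and shortens
the word. Hence the kernel of a homomorphism from `G ∗ H` that is injective on both factors is
torsion-free. Sending the generators of `ℤ/2 ∗ ℤ/3` to `(0 1)(2 3)` and `(0 1 2)` is such a
homomorphism, and it is onto `A₄` because these two permutations generate `A₄`.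
-/

open Monoid

/-- The pre-2025 Mathlib definition `Monoid.IsTorsionFree` (removed from Mathlib). -/
def Monoid.IsTorsionFree (G : Type*) [Monoid G] : Prop :=
  ∀ g : G, g ≠ 1 → ¬IsOfFinOrder g

namespace Monoid.CoprodI

variable {ι : Type*} {M : ι → Type*} [∀ i, Monoid (M i)]

namespace Word

def lastIdx (w : Word M) : Option ι :=
  w.toList.getLast?.map Sigma.fst

def dropLast (w : Word M) : Word M where
  toList := w.toList.dropLast
  ne_one l hl := w.ne_one l (List.dropLast_subset _ hl)
  chain_ne := w.chain_ne.prefix (List.dropLast_prefix _)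

theorem fstIdx_dropLast {w : Word M} (h : 2 ≤ w.toList.length) :
    w.dropLast.fstIdx = w.fstIdx := by
  obtain ⟨a, b, t, hw⟩ : ∃ a b t, w.toList = a :: b :: t := by
    rcases hw : w.toList with _ | ⟨a, _ | ⟨b, t⟩⟩ <;> simp_all
  simp [fstIdx, dropLast, hw]

theorem prod_dropLast_mul {w : Word M} {i : ι} {m : M i}
    (h : w.toList.getLast? = some ⟨i, m⟩) : w.dropLast.prod * of m = w.prod := by
  have hne : w.toList ≠ [] := by rintro h'; simp [h'] at h
  have hlast : w.toList.getLast hne = ⟨i, m⟩ := by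
    rw [List.getLast?_eq_some_getLast hne] at h; exact Option.some.inj h
  conv_rhs => rw [prod, ← List.dropLast_append_getLast hne, hlast]
  simp [prod, dropLast]

variable [DecidableEq ι] [∀ i, DecidableEq (M i)]

theorem length_of_smul_le {i : ι} (m : M i) {w : Word M} (h : w.fstIdx = some i) :
    (of m • w).toList.length ≤ w.toList.length := by
  induction w using consRecOn with
  | empty => simp [fstIdx, empty] at h
  | cons j a v hv ha _ =>
    obtain rfl : j = i := by simpa using h
    conv_lhs =>
      rw [cons_eq_smul, ← mul_smul, ← map_mul, of_smul_def, equivPair_eq_of_fstIdx_ne hv]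
    unfold rcons
    split_ifs <;> simp

end Word

namespace NeWord

theorem prod_ne_one {i j : ι} (w : NeWord M i j) : w.prod ≠ 1 := by
  classical
  intro h
  apply w.toList_ne_nil
  have : w.toWord = .empty := Word.equiv.symm.injective (by simpa [Word.equiv, Word.prod_empty])
  exact congrArg Word.toList this

theorem exists_prod_eq_pow {i j : ι} (w : NeWord M i j) (hij : i ≠ j) (n : ℕ) :
    ∃ w' : NeWord M i j, w'.prod = w.prod ^ (n + 1) := by
  induction n with
  | zero => exact ⟨w, (pow_one _).symm⟩
  | succ n ih =>
    obtain ⟨w', hw'⟩ := ih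
    exact ⟨w'.append hij.symm w, by rw [append_prod, hw', ← pow_succ]⟩

theorem not_isOfFinOrder_prod {i j : ι} (w : NeWord M i j) (hij : i ≠ j) :
    ¬IsOfFinOrder w.prod := by
  intro h
  obtain ⟨n, hn, hpow⟩ := h.exists_pow_eq_one
  obtain ⟨w', hw'⟩ := w.exists_prod_eq_pow hij (n - 1)
  rw [Nat.sub_add_cancel hn, hpow] at hw'
  exact w'.prod_ne_one hw'

end NeWord

theorem Word.not_isOfFinOrder_prod {w : Word M} (h : w.fstIdx ≠ w.lastIdx) :
    ¬IsOfFinOrder w.prod := by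
  have hne : w ≠ .empty := by rintro rfl; exact h rfl
  obtain ⟨i, j, w', rfl⟩ := NeWord.of_word w hne
  have hij : i ≠ j := by
    simpa [Word.fstIdx, Word.lastIdx, NeWord.toWord] using h
  exact w'.not_isOfFinOrder_prod hij

section Group

variable {G : ι → Type*} [∀ i, Group (G i)]

namespace Word

variable [DecidableEq ι] [∀ i, DecidableEq (G i)]

theorem isConj_prod_of_smul_dropLast {w : Word G} {i : ι} {g : G i}
    (h : w.toList.getLast? = some ⟨i, g⟩) : IsConj w.prod (of g • w.dropLast).prod :=
  isConj_iff.mpr ⟨of g, by rw [prod_smul, ← prod_dropLast_mul h]; group⟩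

theorem exists_isConj_of_isOfFinOrder_prod [Nonempty ι] (w : Word G)
    (hw : IsOfFinOrder w.prod) : ∃ (i : ι) (g : G i), IsConj w.prod (of g) := by
  induction hn : w.toList.length using Nat.strong_induction_on generalizing w with | _ n ih =>
  by_cases hcyc : w.fstIdx = w.lastIdx
  swap
  · exact absurd hw (not_isOfFinOrder_prod hcyc)
  rcases hlast : w.toList.getLast? with _ | ⟨i, g⟩
  · have : w = empty := Word.ext (List.getLast?_eq_none_iff.mp hlast)
    exact ⟨Classical.arbitrary ι, 1, by simp [this, prod_empty]⟩
  have hfst : w.fstIdx = some i := by rw [hcyc, lastIdx, hlast]; rfl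
  by_cases hlen : w.toList.length ≤ 1
  · have : w.dropLast = empty :=
      Word.ext (List.length_eq_zero_iff.mp (by simp only [dropLast, List.length_dropLast]; omega))
    exact ⟨i, g, by rw [← prod_dropLast_mul hlast, this, prod_empty, one_mul]⟩
  have hlt : (of g • w.dropLast).toList.length < n := by
    refine (length_of_smul_le g ((fstIdx_dropLast (by omega)).trans hfst)).trans_lt ?_
    simp only [dropLast, List.length_dropLast]
    omega
  have hconj := isConj_prod_of_smul_dropLast hlast
  obtain ⟨j, g', h⟩ := ih _ hlt _ (hconj.isOfFinOrder hw) rfl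
  exact ⟨j, g', hconj.trans h⟩

end Word

theorem exists_isConj_of_isOfFinOrder [Nonempty ι] {x : CoprodI G} (hx : IsOfFinOrder x) :
    ∃ (i : ι) (g : G i), IsConj x (of g) := by
  classical
  obtain ⟨w, rfl⟩ := Word.equiv.symm.surjective x
  exact w.exists_isConj_of_isOfFinOrder_prod hx

end Group

end Monoid.CoprodI

namespace Monoid.Coprod

universe u

variable {G H : Type u} [Group G] [Group H]

instance instGroupCond : ∀ b : Bool, Group (cond b G H)
  | true => ‹Group G›
  | false => ‹Group H›

def mulEquivCoprodI : G ∗ H ≃* CoprodI (fun b : Bool => cond b G H) :=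
  MonoidHom.toMulEquiv (lift (CoprodI.of (M := fun b : Bool => cond b G H) (i := true))
      (CoprodI.of (M := fun b : Bool => cond b G H) (i := false)))
    (CoprodI.lift fun | true => inl | false => inr)
    (hom_ext rfl rfl)
    (CoprodI.ext_hom _ _ fun b => by cases b <;> ext <;> simp)

theorem exists_isConj_of_isOfFinOrder {x : G ∗ H} (hx : IsOfFinOrder x) :
    (∃ g : G, IsConj x (inl g)) ∨ ∃ h : H, IsConj x (inr h) := by
  obtain ⟨b, g, hg⟩ :=
    CoprodI.exists_isConj_of_isOfFinOrder (mulEquivCoprodI.toMonoidHom.isOfFinOrder hx)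
  have hx' : IsConj x (mulEquivCoprodI.symm (CoprodI.of g)) := by
    simpa only [MulEquiv.coe_toMonoidHom, MulEquiv.symm_apply_apply]
      using mulEquivCoprodI.symm.toMonoidHom.map_isConj hg
  cases b
  · exact .inr ⟨g, by simpa [mulEquivCoprodI] using hx'⟩
  · exact .inl ⟨g, by simpa [mulEquivCoprodI] using hx'⟩

theorem isTorsionFree_ker {K : Type*} [Group K] (φ : G ∗ H →* K)
    (hG : Function.Injective (φ.comp inl)) (hH : Function.Injective (φ.comp inr)) :
    Monoid.IsTorsionFree φ.ker := by
  intro x hx1 hx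
  refine hx1 (Subtype.ext ?_)
  have hφx : φ x = 1 := x.2
  have eq_one {A : Type u} [Group A] (f : A →* G ∗ H) (hf : Function.Injective (φ.comp f))
      (a : A) (hxa : IsConj (x : G ∗ H) (f a)) : (x : G ∗ H) = 1 := by
    have hφa : φ (f a) = 1 := isConj_one_right.mp (hφx ▸ φ.map_isConj hxa)
    rwa [(injective_iff_map_eq_one _).mp hf a hφa, map_one, isConj_one_left] at hxa
  rcases exists_isConj_of_isOfFinOrder (Submonoid.isOfFinOrder_coe.mpr hx) with ⟨g, hg⟩ | ⟨h, hh⟩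
  · exact eq_one inl hG g hg
  · exact eq_one inr hH h hh

end Monoid.Coprod

section AlternatingFin4

open Equiv

def doubleTransposition : alternatingGroup (Fin 4) :=
  ⟨swap 0 1 * swap 2 3, Perm.mem_alternatingGroup.mpr (by decide)⟩

def threeCycle : alternatingGroup (Fin 4) :=
  ⟨c[0, 1, 2], Perm.mem_alternatingGroup.mpr (by decide)⟩

def zmod2ToA4 : Multiplicative (ZMod 2) →* alternatingGroup (Fin 4) where
  toFun m := doubleTransposition ^ (Multiplicative.toAdd m).val
  map_one' := by decide
  map_mul' := by decide

def zmod3ToA4 : Multiplicative (ZMod 3) →* alternatingGroup (Fin 4) where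
  toFun m := threeCycle ^ (Multiplicative.toAdd m).val
  map_one' := by decide
  map_mul' := by decide

theorem zmod2ToA4_injective : Function.Injective zmod2ToA4 := by decide

theorem zmod3ToA4_injective : Function.Injective zmod3ToA4 := by decide

theorem surjective_lift_zmod2ToA4_zmod3ToA4 :
    Function.Surjective (Coprod.lift zmod2ToA4 zmod3ToA4) := by
  have hdecomp : ∀ y : alternatingGroup (Fin 4),
      ∃ a b c, zmod3ToA4 a * zmod2ToA4 b * zmod3ToA4 c = y := by
    decide
  intro y
  obtain ⟨a, b, c, rfl⟩ := hdecomp y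
  exact ⟨Coprod.inr a * Coprod.inl b * Coprod.inr c, by simp⟩

end AlternatingFin4

theorem stmt_13 :
    ∃ φ : Coprod (Multiplicative (ZMod 2)) (Multiplicative (ZMod 3)) →*
        alternatingGroup (Fin 4),
      Function.Surjective φ ∧ Monoid.IsTorsionFree φ.ker :=
  ⟨Coprod.lift zmod2ToA4 zmod3ToA4, surjective_lift_zmod2ToA4_zmod3ToA4,
    Coprod.isTorsionFree_ker _ zmod2ToA4_injective zmod3ToA4_injective⟩
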